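/- Outer Pasch holds in planes over ordered fields: let K be a linearly ordered field and V a K-vector space. If Sbtw K a p c, Sbtw K b c q, and a, b, c are not collinear over K, then there exists x with Sbtw K b p x and Sbtw K a x q. -/

import Mathlib

/-!
Write `p = lineMap a c t` and `c = lineMap b q s` with `s, t ∈ (0, 1)`. Expanding, `p` is the
affine combination `(1 - t) a + t (1 - s) b + t s q`; grouping the `a`- and `q`-terms gives
`p = lineMap b x w` with `w = 1 - t + t s` and `x = lineMap a q (t s / w)`, and both parameters
lie in `(0, 1)`. Non-collinearity of `a, b, c` rules out the degenerate cases `b = x` and `a = q`.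
-/

open AffineMap

theorem collinear_triple_of_mem_affineSpan_pair_of_mem_affineSpan_pair {K V P : Type*}
    [DivisionRing K] [AddCommGroup V] [Module K V] [AddTorsor V P] {a b c q : P}
    (hb : b ∈ line[K, a, q]) (hc : c ∈ line[K, b, q]) : Collinear K ({a, b, c} : Set P) :=
  collinear_triple_of_mem_affineSpan_pair (left_mem_affineSpan_pair K a q) hb
    (affineSpan_pair_le_of_mem_of_mem hb (right_mem_affineSpan_pair K a q) hc)

theorem lineMap_lineMap_eq_lineMap_lineMap {K V : Type*} [Field K] [AddCommGroup V] [Module K V]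
    (a b q : V) {s t : K} (hw : 1 - t + t * s ≠ 0) :
    lineMap a (lineMap b q s) t =
      lineMap b (lineMap a q (t * s / (1 - t + t * s))) (1 - t + t * s) := by
  simp only [lineMap_apply_module]
  match_scalars <;> field_simp <;> ring

/-- Outer Pasch holds in planes over ordered fields. -/
theorem outer_pasch {K : Type*} [Field K] [LinearOrder K] [IsStrictOrderedRing K] {V : Type*} [AddCommGroup V]
    [Module K V] {a b c p q : V}
    (hp : Sbtw K a p c) (hq : Sbtw K b c q)
    (hnc : ¬ Collinear K ({a, b, c} : Set V)) :
    ∃ x : V, Sbtw K b p x ∧ Sbtw K a x q := by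
  obtain ⟨t, ⟨ht0, ht1⟩, rfl⟩ := hp.mem_image_Ioo
  obtain ⟨s, ⟨hs0, hs1⟩, rfl⟩ := hq.mem_image_Ioo
  have hw0 : 0 < 1 - t + t * s := by nlinarith
  have hw1 : 1 - t + t * s < 1 := by nlinarith
  have hu0 : 0 < t * s / (1 - t + t * s) := by positivity
  have hu1 : t * s / (1 - t + t * s) < 1 := (div_lt_one hw0).2 (by linarith)
  have hc : lineMap b q s ∈ line[K, b, q] := lineMap_mem_affineSpan_pair s b q
  have haq : a ≠ q := by
    rintro rfl
    exact hnc (collinear_triple_of_mem_affineSpan_pair (right_mem_affineSpan_pair K b a)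
      (left_mem_affineSpan_pair K b a) hc)
  set x := lineMap a q (t * s / (1 - t + t * s))
  have hbx : b ≠ x := fun hbx => hnc
    (collinear_triple_of_mem_affineSpan_pair_of_mem_affineSpan_pair
      (hbx ▸ lineMap_mem_affineSpan_pair _ a q) hc)
  refine ⟨x, ?_, sbtw_lineMap_iff.2 ⟨haq, hu0, hu1⟩⟩
  rw [lineMap_lineMap_eq_lineMap_lineMap a b q hw0.ne']
  exact sbtw_lineMap_iff.2 ⟨hbx, hw0, hw1⟩
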